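/- arXiv:1304.5388 — 2 statements merged into one kernel-verified Lean document; each statement's English description precedes it below -/
import Mathlib

section
/- Let φ = ⋀_{i=1}^k C_i be a CNF formula and u a fresh variable. Define Φ = {C_i ∨ u : i = 1,...,k} and α = u. Then (Φ, α) is an argument (Φ is consistent, Φ ⊨ α, and no proper subset of Φ entails α) if and only if φ is unsatisfiable and removing any single clause from φ yields a satisfiable formula. -/
/-! Since `u` occurs in no clause, a valuation falsifying `u` satisfies the clauses `Cᵢ ∨ u`
exactly when it satisfies the clauses `Cᵢ`, so `{Cᵢ ∨ u : i ∈ s} ⊨ u` says precisely that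
`{Cᵢ : i ∈ s}` is unsatisfiable; and `u = 1` satisfies every `Cᵢ ∨ u`. Entailment is monotone
in the premises, so minimality only has to be checked on the sets obtained by dropping one
premise, and dropping `Cᵢ ∨ u` is dropping `Cᵢ` because the clauses are pairwise distinct. -/

inductive PropForm (α : Type) where
  | var : α → PropForm α
  | tru : PropForm α
  | fls : PropForm α
  | not : PropForm α → PropForm α
  | and : PropForm α → PropForm α → PropForm α
  | or : PropForm α → PropForm α → PropForm α
  deriving DecidableEq

def PropForm.eval {α : Type} (v : α → Bool) : PropForm α → Bool
  | .var a => v a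
  | .tru => true
  | .fls => false
  | .not φ => !(PropForm.eval v φ)
  | .and φ ψ => PropForm.eval v φ && PropForm.eval v ψ
  | .or φ ψ => PropForm.eval v φ || PropForm.eval v ψ

/-- `v` satisfies every formula in `Φ`. -/
def Models {α : Type} (Φ : Set (PropForm α)) (v : α → Bool) : Prop :=
  ∀ φ ∈ Φ, PropForm.eval v φ = true

/-- `Φ` entails `ψ`. -/
def Entails {α : Type} (Φ : Set (PropForm α)) (ψ : PropForm α) : Prop :=
  ∀ v : α → Bool, Models Φ v → PropForm.eval v ψ = true

/-- `Φ` is consistent. -/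
def Consistent {α : Type} (Φ : Set (PropForm α)) : Prop :=
  ∃ v : α → Bool, Models Φ v

/-- Conjunction of a list of formulae. -/
def bigAnd {α : Type} (L : List (PropForm α)) : PropForm α :=
  L.foldr PropForm.and PropForm.tru

/-- The propositional formula corresponding to a clause given as a list of literals
(variable index together with polarity). -/
def clauseForm (L : List (ℕ × Bool)) : PropForm ℕ :=
  L.foldr (fun l acc => .or (if l.2 then .var l.1 else .not (.var l.1)) acc) .fls

/-- `(Φ, α)` is an argument: `Φ` is consistent, `Φ ⊨ α`, and no proper subset of `Φ`
entails `α`. -/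
def IsArgument (Φ : Finset (PropForm ℕ)) (α : PropForm ℕ) : Prop :=
  Consistent (↑Φ : Set (PropForm ℕ)) ∧ Entails (↑Φ : Set (PropForm ℕ)) α ∧
    ∀ Φ' ⊂ Φ, ¬ Entails ((Φ' : Finset (PropForm ℕ)) : Set (PropForm ℕ)) α

theorem Entails.mono {α : Type} {Φ Ψ : Set (PropForm α)} {ψ : PropForm α} (hΦΨ : Φ ⊆ Ψ)
    (h : Entails Φ ψ) : Entails Ψ ψ :=
  fun v hv => h v fun φ hφ => hv φ (hΦΨ hφ)

theorem isArgument_iff_forall_not_entails_erase (Φ : Finset (PropForm ℕ)) (α : PropForm ℕ) :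
    IsArgument Φ α ↔
      Consistent (↑Φ : Set (PropForm ℕ)) ∧ Entails (↑Φ : Set (PropForm ℕ)) α ∧
        ∀ φ ∈ Φ, ¬ Entails (↑(Φ.erase φ) : Set (PropForm ℕ)) α := by
  refine and_congr_right fun _ => and_congr_right fun _ =>
    ⟨fun h φ hφ => h _ (Finset.erase_ssubset hφ), fun h Φ' hΦ' hent => ?_⟩
  obtain ⟨φ, hφ, hsub⟩ := Finset.ssubset_iff_exists_subset_erase.mp hΦ'
  exact h φ hφ (hent.mono (Finset.coe_subset.mpr hsub))

theorem consistent_image_or_var {ι : Type} (f : ι → PropForm ℕ) (u : ℕ) (s : Set ι) :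
    Consistent ((fun i => (f i).or (.var u)) '' s) := by
  refine ⟨fun _ => true, ?_⟩
  rintro _ ⟨i, -, rfl⟩
  simp [PropForm.eval]

theorem entails_image_or_var_iff {ι : Type} (f : ι → PropForm ℕ) (u : ℕ)
    (hfresh : ∀ i v b, (f i).eval (Function.update v u b) = (f i).eval v) (s : Set ι) :
    Entails ((fun i => (f i).or (.var u)) '' s) (.var u) ↔
      ¬ ∃ σ : ℕ → Bool, ∀ i ∈ s, (f i).eval σ = true := by
  constructor
  · rintro hent ⟨σ, hσ⟩
    have hmodels : Models ((fun i => (f i).or (.var u)) '' s) (Function.update σ u false) := by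
      rintro _ ⟨i, hi, rfl⟩
      simp [PropForm.eval, hfresh, hσ i hi]
    simpa [PropForm.eval] using hent _ hmodels
  · intro hunsat v hv
    by_contra hvu
    simp only [PropForm.eval, Bool.not_eq_true] at hvu
    refine hunsat ⟨v, fun i hi => ?_⟩
    simpa [PropForm.eval, hvu] using hv _ ⟨i, hi, rfl⟩

theorem clauseForm_eval_eq_true_iff (v : ℕ → Bool) (L : List (ℕ × Bool)) :
    (clauseForm L).eval v = true ↔ ∃ l ∈ L, v l.1 = l.2 := by
  induction L with
  | nil => simp [clauseForm, PropForm.eval]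
  | cons l L ih =>
    obtain ⟨n, _ | _⟩ := l <;> simp_all [clauseForm, PropForm.eval]

theorem clauseForm_eval_update_of_forall_ne (v : ℕ → Bool) (u : ℕ) (b : Bool)
    {L : List (ℕ × Bool)} (h : ∀ l ∈ L, l.1 ≠ u) :
    (clauseForm L).eval (Function.update v u b) = (clauseForm L).eval v := by
  rw [Bool.eq_iff_iff, clauseForm_eval_eq_true_iff, clauseForm_eval_eq_true_iff]
  refine exists_congr fun l => and_congr_right fun hl => ?_
  rw [Function.update_of_ne (h l hl)]

theorem clauseForm_injective : Function.Injective clauseForm := by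
  intro L M h
  induction L generalizing M with
  | nil => cases M <;> simp_all [clauseForm]
  | cons l L ih =>
    cases M with
    | nil => simp [clauseForm] at h
    | cons m M =>
      simp only [clauseForm, List.foldr, PropForm.or.injEq] at h
      obtain ⟨n, _ | _⟩ := l <;> obtain ⟨m, _ | _⟩ := m <;> simp_all [ih h.2]

/-- With `Φ = {Cᵢ ∨ u}` and `α = u`, the pair `(Φ, α)` is an argument iff
`φ = ⋀ᵢ Cᵢ` is unsatisfiable but removing any single clause makes it satisfiable. -/
theorem stmt16 (k : ℕ) (C : Fin k → List (ℕ × Bool)) (u : ℕ)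
    (hfresh : ∀ i, ∀ l ∈ C i, l.1 ≠ u)
    (hinj : Function.Injective C) :
    IsArgument
      (Finset.image
        (fun i => PropForm.or (clauseForm (C i)) (.var u))
        (Finset.univ : Finset (Fin k)))
      (PropForm.var u)
    ↔ ((¬ ∃ σ : ℕ → Bool, ∀ i, ∃ l ∈ C i, σ l.1 = l.2) ∧
        ∀ i : Fin k, ∃ σ : ℕ → Bool, ∀ j, j ≠ i → ∃ l ∈ C j, σ l.1 = l.2) := by
  have hD : Function.Injective fun i => PropForm.or (clauseForm (C i)) (.var u) :=
    fun i j h => hinj (clauseForm_injective (PropForm.or.inj h).1)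
  have hent := entails_image_or_var_iff (fun i => clauseForm (C i)) u
    fun i v b => clauseForm_eval_update_of_forall_ne v u b (hfresh i)
  rw [isArgument_iff_forall_not_entails_erase, Finset.forall_mem_image]
  simp only [← Finset.image_erase hD, Finset.coe_image, hent, clauseForm_eval_eq_true_iff,
    consistent_image_or_var, Finset.coe_univ, Finset.coe_erase, Set.mem_univ, Set.mem_sdiff,
    Set.mem_singleton_iff, true_and, not_not, forall_const, Finset.mem_univ]
end

section
/- Let φ = ⋀_{i=1}^k C_i be a 3-CNF formula over variables x_1,...,x_n, and let c_0, c_1,...,c_k, s be fresh variables. For each j define γ_j = (c_0 = x_j) ∧ ⋀_{i : x_j ∈ C_i} (c_{i−1} = c_i) and δ_j = (x_j = s) ∧ ⋀_{i : ¬x_j ∈ C_i} (c_{i−1} = c_i). Let Δ = {γ_j, δ_j : 1 ≤ j ≤ n} ∪ {ψ}, ψ = (c_k = s), and α = (c_0 = s). Then φ is satisfiable if and only if there exists Φ ⊆ Δ with ψ ∈ Φ, Φ consistent, Φ ⊨ α, and no proper subset of Φ entails α. -/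
/-- Variables: the original variables `x j`, the chain variables `c 0, ..., c k`, and `s`. -/
inductive V18 where
  | x : ℕ → V18
  | c : ℕ → V18
  | s : V18
  deriving DecidableEq

/-- The Boolean equality constraint `a = b`. -/
def eqF (a b : V18) : PropForm V18 :=
  .or (.and (.var a) (.var b)) (.and (.not (.var a)) (.not (.var b)))

/-- `γ_j = (c_0 = x_j) ∧ ⋀_{i : x_j ∈ C_i} (c_{i-1} = c_i)`. -/
def gammaF (k : ℕ) (C : Fin k → List (ℕ × Bool)) (j : ℕ) : PropForm V18 :=
  bigAnd (eqF (V18.c 0) (V18.x j) ::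
    ((List.finRange k).filterMap fun i =>
      if (j, true) ∈ C i then some (eqF (V18.c i.val) (V18.c (i.val + 1))) else none))

/-- `δ_j = (x_j = s) ∧ ⋀_{i : ¬x_j ∈ C_i} (c_{i-1} = c_i)`. -/
def deltaF (k : ℕ) (C : Fin k → List (ℕ × Bool)) (j : ℕ) : PropForm V18 :=
  bigAnd (eqF (V18.x j) V18.s ::
    ((List.finRange k).filterMap fun i =>
      if (j, false) ∈ C i then some (eqF (V18.c i.val) (V18.c (i.val + 1))) else none))

/-!
Every formula of `Δ` is a conjunction of equalities, so `Φ ⊨ α` says that `c_0` and `s` are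
linked by a chain of equalities of `Φ`. Choosing `γ_j` or `δ_j` according to a truth value
`σ j` contributes the link `c_i = c_{i+1}` exactly for the clauses `C_i` containing the literal
of `x_j` that `σ` makes true. Together with `ψ`, the choice made by a satisfying `σ` entails `α`,
and a minimal subset of it still needs `ψ` (without it `s` is cut off). Conversely a minimal
support containing `ψ` never contains both `γ_j` and `δ_j`, as these two alone entail `α`; so it
is contained in the choice of some `σ` together with `ψ`, and if `σ` left a clause `C_i`
unsatisfied, the assignment true on `c_0, …, c_i` and false elsewhere on the chain and on `s`
would refute `α`.
-/

lemma Entails.exists_minimal {α : Type} {Φ : Set (PropForm α)} {a : PropForm α}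
    (hfin : Φ.Finite) (h : Entails Φ a) :
    ∃ Ψ ⊆ Φ, Entails Ψ a ∧ ∀ Ψ' ⊂ Ψ, ¬ Entails Ψ' a := by
  have hfam : {Ψ | Ψ ⊆ Φ ∧ Entails Ψ a}.Finite :=
    hfin.finite_subsets.subset fun Ψ hΨ => hΨ.1
  obtain ⟨Ψ, hΨΦ, hmin⟩ := hfam.exists_le_minimal (a := Φ) ⟨subset_rfl, h⟩
  refine ⟨Ψ, hΨΦ, hmin.prop.2, fun Ψ' hss hΨ' => hss.not_subset ?_⟩
  exact hmin.2 ⟨hss.subset.trans hΨΦ, hΨ'⟩ hss.subset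

lemma eval_bigAnd {α : Type} (v : α → Bool) (L : List (PropForm α)) :
    (bigAnd L).eval v = true ↔ ∀ φ ∈ L, φ.eval v = true := by
  induction L with
  | nil => simp [bigAnd, PropForm.eval]
  | cons φ L ih => simp [bigAnd, PropForm.eval, ← ih]

lemma eval_eqF (v : V18 → Bool) (a b : V18) : (eqF a b).eval v = true ↔ v a = v b := by
  cases ha : v a <;> cases hb : v b <;> simp [eqF, PropForm.eval, ha, hb]

lemma forall_eval_links_iff (v : V18 → Bool) {k : ℕ} (C : Fin k → List (ℕ × Bool))
    (l : ℕ × Bool) :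
    (∀ φ ∈ (List.finRange k).filterMap (fun i =>
        if l ∈ C i then some (eqF (V18.c i.val) (V18.c (i.val + 1))) else none),
      φ.eval v = true) ↔
    ∀ i : Fin k, l ∈ C i → v (.c i) = v (.c (i + 1)) := by
  simp [List.mem_filterMap, eval_eqF]

lemma eval_gammaF (v : V18 → Bool) (k : ℕ) (C : Fin k → List (ℕ × Bool)) (j : ℕ) :
    (gammaF k C j).eval v = true ↔
      v (.c 0) = v (.x j) ∧ ∀ i : Fin k, (j, true) ∈ C i → v (.c i) = v (.c (i + 1)) := by
  rw [gammaF, eval_bigAnd, List.forall_mem_cons, eval_eqF, forall_eval_links_iff]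

lemma eval_deltaF (v : V18 → Bool) (k : ℕ) (C : Fin k → List (ℕ × Bool)) (j : ℕ) :
    (deltaF k C j).eval v = true ↔
      v (.x j) = v .s ∧ ∀ i : Fin k, (j, false) ∈ C i → v (.c i) = v (.c (i + 1)) := by
  rw [deltaF, eval_bigAnd, List.forall_mem_cons, eval_eqF, forall_eval_links_iff]

lemma gammaF_ne_eqF (k : ℕ) (C : Fin k → List (ℕ × Bool)) (j : ℕ) (a b : V18) :
    gammaF k C j ≠ eqF a b := by
  simp [gammaF, bigAnd, eqF]

lemma deltaF_ne_eqF (k : ℕ) (C : Fin k → List (ℕ × Bool)) (j : ℕ) (a b : V18) :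
    deltaF k C j ≠ eqF a b := by
  simp [deltaF, bigAnd, eqF]

lemma entails_of_gammaF_of_deltaF (k : ℕ) (C : Fin k → List (ℕ × Bool)) (j : ℕ) :
    Entails {gammaF k C j, deltaF k C j} (eqF (.c 0) .s) := by
  intro v hv
  have hγ := (eval_gammaF v k C j).1 (hv _ (Set.mem_insert _ _))
  have hδ := (eval_deltaF v k C j).1 (hv _ (Set.mem_insert_of_mem _ rfl))
  exact (eval_eqF v _ _).2 (hγ.1.trans hδ.1)

lemma consistent_of_subset_gammaF_deltaF_eqF {k n : ℕ} {C : Fin k → List (ℕ × Bool)}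
    {Φ : Set (PropForm V18)}
    (hΦ : Φ ⊆ {χ | ∃ j < n, χ = gammaF k C j ∨ χ = deltaF k C j} ∪ {eqF (V18.c k) V18.s}) :
    Consistent Φ := by
  refine ⟨fun _ => true, fun χ hχ => ?_⟩
  rcases hΦ hχ with ⟨j, -, rfl | rfl⟩ | rfl
  · simp [eval_gammaF]
  · simp [eval_deltaF]
  · simp [eval_eqF]

lemma gammaF_not_mem_of_deltaF_mem {k : ℕ} {C : Fin k → List (ℕ × Bool)} {Φ : Set (PropForm V18)}
    (hψ : eqF (.c k) .s ∈ Φ) (hmin : ∀ Φ' ⊂ Φ, ¬ Entails Φ' (eqF (.c 0) .s)) {j : ℕ}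
    (hδ : deltaF k C j ∈ Φ) : gammaF k C j ∉ Φ := by
  intro hγ
  refine hmin _ ⟨Set.insert_subset hγ (Set.singleton_subset_iff.2 hδ), fun h => ?_⟩
    (entails_of_gammaF_of_deltaF k C j)
  rcases h hψ with h | h
  exacts [gammaF_ne_eqF k C j _ _ h.symm, deltaF_ne_eqF k C j _ _ h.symm]

lemma eq_of_forall_lt_eq_succ {β : Type*} {f : ℕ → β} {k : ℕ}
    (h : ∀ i < k, f i = f (i + 1)) : f 0 = f k := by
  induction k with
  | zero => rfl
  | succ k ih => exact (ih fun i hi => h i (by omega)).trans (h k (by omega))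

section Choice

variable {k : ℕ} (C : Fin k → List (ℕ × Bool))

def chosenF (σ : ℕ → Bool) (j : ℕ) : PropForm V18 :=
  cond (σ j) (gammaF k C j) (deltaF k C j)

lemma chosenF_eq_gammaF_or_deltaF (σ : ℕ → Bool) (j : ℕ) :
    chosenF C σ j = gammaF k C j ∨ chosenF C σ j = deltaF k C j := by
  cases hσ : σ j <;> simp [chosenF, hσ]

lemma insert_image_chosenF_subset (n : ℕ) (σ : ℕ → Bool) :
    insert (eqF (.c k) .s) (chosenF C σ '' Set.Iio n) ⊆
      {χ | ∃ j < n, χ = gammaF k C j ∨ χ = deltaF k C j} ∪ {eqF (V18.c k) V18.s} := by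
  rintro χ (rfl | ⟨j, hj, rfl⟩)
  exacts [Or.inr rfl, Or.inl ⟨j, hj, chosenF_eq_gammaF_or_deltaF C σ j⟩]

lemma subset_insert_image_chosenF {n : ℕ} {Φ : Set (PropForm V18)} [DecidablePred (· ∈ Φ)]
    (hsub : Φ ⊆ {χ | ∃ j < n, χ = gammaF k C j ∨ χ = deltaF k C j} ∪ {eqF (V18.c k) V18.s})
    (hψ : eqF (.c k) .s ∈ Φ) (hmin : ∀ Φ' ⊂ Φ, ¬ Entails Φ' (eqF (.c 0) .s)) :
    Φ ⊆ insert (eqF (.c k) .s) (chosenF C (fun j => decide (gammaF k C j ∈ Φ)) '' Set.Iio n) := by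
  intro χ hχ
  rcases hsub hχ with ⟨j, hj, rfl | rfl⟩ | rfl
  · exact Or.inr ⟨j, hj, by simp [chosenF, hχ]⟩
  · exact Or.inr ⟨j, hj, by simp [chosenF, gammaF_not_mem_of_deltaF_mem hψ hmin hχ]⟩
  · exact Or.inl rfl

lemma eval_chosenF_link {v : V18 → Bool} {σ : ℕ → Bool} {j : ℕ}
    (h : (chosenF C σ j).eval v = true) {i : Fin k} (hi : (j, σ j) ∈ C i) :
    v (.c i) = v (.c (i + 1)) := by
  cases hσ : σ j <;> simp only [chosenF, hσ, cond_true, cond_false] at h hi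
  · exact ((eval_deltaF v k C j).1 h).2 i hi
  · exact ((eval_gammaF v k C j).1 h).2 i hi

-- The chain `c 0, …, c k, s` is broken exactly after `c t`, so `α` fails.
def cutAssignment (σ : ℕ → Bool) (t : ℕ) : V18 → Bool
  | .x j => σ j
  | .c m => decide (m ≤ t)
  | .s => false

lemma eval_cutAssignment_chosenF {σ : ℕ → Bool} {t j : ℕ}
    (ht : ∀ i : Fin k, (j, σ j) ∈ C i → i.val ≠ t) :
    (chosenF C σ j).eval (cutAssignment σ t) = true := by
  have hlink : ∀ i : Fin k, (j, σ j) ∈ C i →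
      cutAssignment σ t (.c i) = cutAssignment σ t (.c (i + 1)) := by
    intro i hi
    have := ht i hi
    simp only [cutAssignment, decide_eq_decide]
    omega
  cases hσ : σ j <;> simp only [hσ] at hlink
  · simpa [chosenF, hσ, eval_deltaF, cutAssignment] using hlink
  · simpa [chosenF, hσ, eval_gammaF, cutAssignment] using hlink

lemma eval_cutAssignment_target (σ : ℕ → Bool) (t : ℕ) :
    (eqF (V18.c 0) V18.s).eval (cutAssignment σ t) = false := by
  simp [eqF, PropForm.eval, cutAssignment]

variable (n : ℕ)

lemma entails_of_satisfies {σ : ℕ → Bool} (hσ : ∀ i, ∃ l ∈ C i, σ l.1 = l.2)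
    (hvar : ∀ i, ∀ l ∈ C i, l.1 < n) :
    Entails (insert (eqF (.c k) .s) (chosenF C σ '' Set.Iio n)) (eqF (.c 0) .s) := by
  intro v hv
  have hchain : v (.c 0) = v (.c k) := by
    refine eq_of_forall_lt_eq_succ (f := fun m => v (.c m)) fun i hi => ?_
    obtain ⟨⟨j, b⟩, hl, hb : σ j = b⟩ := hσ ⟨i, hi⟩
    subst hb
    exact eval_chosenF_link C
      (hv _ (Set.mem_insert_of_mem _ ⟨j, hvar _ _ hl, rfl⟩)) (i := ⟨i, hi⟩) hl
  exact (eval_eqF v _ _).2 (hchain.trans ((eval_eqF v _ _).1 (hv _ (Set.mem_insert _ _))))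

lemma not_entails_of_subset_chosenF {Φ : Set (PropForm V18)} (σ : ℕ → Bool)
    (hΦ : Φ ⊆ chosenF C σ '' Set.Iio n) : ¬ Entails Φ (eqF (.c 0) .s) := by
  intro h
  have hmodels : Models Φ (cutAssignment σ k) := by
    intro χ hχ
    obtain ⟨j, -, rfl⟩ := hΦ hχ
    exact eval_cutAssignment_chosenF C fun i _ => i.isLt.ne
  simpa [eval_cutAssignment_target] using h _ hmodels

lemma not_entails_of_unsatisfied {Φ : Set (PropForm V18)} {σ : ℕ → Bool} {i : Fin k}
    (hΦ : Φ ⊆ insert (eqF (.c k) .s) (chosenF C σ '' Set.Iio n))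
    (hi : ∀ l ∈ C i, σ l.1 ≠ l.2) : ¬ Entails Φ (eqF (.c 0) .s) := by
  intro h
  have hmodels : Models Φ (cutAssignment σ i) := by
    intro χ hχ
    rcases hΦ hχ with rfl | ⟨j, -, rfl⟩
    · simp [eval_eqF, cutAssignment]
    · exact eval_cutAssignment_chosenF C fun i' hi' hii' => hi _ (Fin.ext hii' ▸ hi') rfl
  simpa [eval_cutAssignment_target] using h _ hmodels

end Choice

theorem stmt18_general (k n : ℕ) (C : Fin k → List (ℕ × Bool))
    (hvar : ∀ i, ∀ l ∈ C i, l.1 < n) :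
    (∃ σ : ℕ → Bool, ∀ i, ∃ l ∈ C i, σ l.1 = l.2)
    ↔ (∃ Φ : Set (PropForm V18),
        Φ ⊆ ({χ | ∃ j < n, χ = gammaF k C j ∨ χ = deltaF k C j} ∪ {eqF (V18.c k) V18.s}) ∧
        eqF (V18.c k) V18.s ∈ Φ ∧
        Consistent Φ ∧
        Entails Φ (eqF (V18.c 0) V18.s) ∧
        ∀ Φ' ⊂ Φ, ¬ Entails Φ' (eqF (V18.c 0) V18.s)) := by
  constructor
  · rintro ⟨σ, hσ⟩
    obtain ⟨Φ, hΦ, hent, hmin⟩ := Entails.exists_minimal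
      (((Set.finite_Iio n).image _).insert _) (entails_of_satisfies C n hσ hvar)
    have hsub := hΦ.trans (insert_image_chosenF_subset C n σ)
    have hψ : eqF (.c k) .s ∈ Φ := by
      by_contra hψ
      exact not_entails_of_subset_chosenF C n σ
        (fun χ hχ => (hΦ hχ).resolve_left fun h => hψ (h ▸ hχ)) hent
    exact ⟨Φ, hsub, hψ, consistent_of_subset_gammaF_deltaF_eqF hsub, hent, hmin⟩
  · rintro ⟨Φ, hsub, hψ, -, hent, hmin⟩
    classical
    refine ⟨fun j => decide (gammaF k C j ∈ Φ), fun i => ?_⟩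
    by_contra! hi
    exact not_entails_of_unsatisfied C n (subset_insert_image_chosenF C hsub hψ hmin) hi hent

/-- The 3-CNF formula `φ = ⋀ᵢ Cᵢ` over variables `x 0, ..., x (n-1)` is satisfiable iff
`Δ = {γ_j, δ_j : j < n} ∪ {ψ}` with `ψ = (c_k = s)` contains a minimal support `Φ` for
`α = (c_0 = s)` with `ψ ∈ Φ`. -/
theorem stmt18 (k n : ℕ) (C : Fin k → List (ℕ × Bool))
    (hlen : ∀ i, (C i).length ≤ 3) (hvar : ∀ i, ∀ l ∈ C i, l.1 < n) :
    (∃ σ : ℕ → Bool, ∀ i, ∃ l ∈ C i, σ l.1 = l.2)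
    ↔ (∃ Φ : Set (PropForm V18),
        Φ ⊆ ({χ | ∃ j < n, χ = gammaF k C j ∨ χ = deltaF k C j} ∪ {eqF (V18.c k) V18.s}) ∧
        eqF (V18.c k) V18.s ∈ Φ ∧
        Consistent Φ ∧
        Entails Φ (eqF (V18.c 0) V18.s) ∧
        ∀ Φ' ⊂ Φ, ¬ Entails Φ' (eqF (V18.c 0) V18.s)) :=
  stmt18_general k n C hvar
end
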